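/- arXiv:1910.14477 — 2 statements merged into one kernel-verified Lean document; each statement's English description precedes it below -/
import Mathlib

section
/- From local to semi-global Lieb–Robinson bounds (Theorem 4, part i). Let ξ ≥ 1, ξ₀ > 0 and t ∈ ℝ, and suppose the Hermitian operator H₀ satisfies ‖[O_X̂(H₀,s), O_Ŷ]‖ ≤ F(s,X̂,Ŷ)·e^{−d(X̂,Ŷ)/ξ₀}·‖O_X̂‖·‖O_Ŷ‖ for s ∈ {t,−t}, for all subsets X̂,Ŷ ⊆ Λ with diam(X̂) ≤ 2ξ+1 and diam(Ŷ) ≤ 2ξ+1, and all operators O_X̂, O_Ŷ supported on X̂, Ŷ, where F(t,·,·) = F(−t,·,·). Define F̃(t) := sup{F(t,X̂,Ŷ) : X̂,Ŷ ⊆ Λ, diam(X̂) ≤ 2ξ+1, diam(Ŷ) ≤ 2ξ+1}. Then for every X ⊆ Λ with diam(X) ≤ 2ξ+1, every L ⊆ Λ, and all operators O_X, O_L supported on X and L: ‖[O_X(H₀,t), O_L]‖ ≤ 2·|L^{(ξ)}|·F̃(t)·e^{−d(X,L)/ξ₀}·‖O_X‖·‖O_L‖. -/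
open scoped Classical

namespace LightCone

variable {Λ : Type} [Fintype Λ] [DecidableEq Λ]

/-- `dist` is an integer-valued metric on `Λ`. -/
def IsMetricN (dist : Λ → Λ → ℕ) : Prop :=
  (∀ i j, dist i j = 0 ↔ i = j) ∧ (∀ i j, dist i j = dist j i) ∧
  (∀ i j k, dist i k ≤ dist i j + dist j k)

/-- `d(X,Y)`: the minimum distance between the subsets `X` and `Y`. -/
noncomputable def setDist (dist : Λ → Λ → ℕ) (X Y : Finset Λ) : ℕ :=
  sInf {n : ℕ | ∃ i ∈ X, ∃ j ∈ Y, dist i j = n}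

/-- `diam(X) = 1 + max_{i,j ∈ X} d(i,j)`. -/
def diam (dist : Λ → Λ → ℕ) (X : Finset Λ) : ℕ :=
  1 + X.sup fun i => X.sup fun j => dist i j

/-- `X[r] = {i ∈ Λ | d(i,X) ≤ r}`. -/
noncomputable def ball (dist : Λ → Λ → ℕ) (X : Finset Λ) (r : ℝ) : Finset Λ :=
  Finset.univ.filter fun i => ∃ j ∈ X, (dist i j : ℝ) ≤ r

/-- `net` is a choice of the coarse-grained lattice `Λ^{(ξ)}`:
a subset of minimum cardinality such that `net[ξ] = Λ`. -/
def IsNet (dist : Λ → Λ → ℕ) (ξ : ℝ) (net : Finset Λ) : Prop :=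
  (∀ i : Λ, ∃ j ∈ net, (dist i j : ℝ) ≤ ξ) ∧
  (∀ L : Finset Λ, (∀ i : Λ, ∃ j ∈ L, (dist i j : ℝ) ≤ ξ) → net.card ≤ L.card)

/-- `C` is a choice of the coarse-grained subset `X^{(ξ)} ⊆ Λ^{(ξ)}`:
a subset of `net` of minimum cardinality such that `C[ξ] ⊇ X`. -/
def IsCoarse (dist : Λ → Λ → ℕ) (ξ : ℝ) (net X C : Finset Λ) : Prop :=
  C ⊆ net ∧ (∀ i ∈ X, ∃ j ∈ C, (dist i j : ℝ) ≤ ξ) ∧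
  (∀ C' : Finset Λ, C' ⊆ net → (∀ i ∈ X, ∃ j ∈ C', (dist i j : ℝ) ≤ ξ) → C.card ≤ C'.card)

/-- `γ` is a geometric constant for the lattice `(Λ, dist)` in spatial dimension `D`. -/
def GeomConst (D : ℕ) (γ : ℝ) (dist : Λ → Λ → ℕ) : Prop :=
  (∀ X : Finset Λ, (X.card : ℝ) ≤ γ * (diam dist X : ℝ) ^ D) ∧
  (∀ (i : Λ) (r : ℝ), 1 ≤ r → ((ball dist {i} r).card : ℝ) ≤ γ * (2 * r) ^ D) ∧
  (∀ ξ : ℝ, 1 ≤ ξ → ∀ net X C : Finset Λ, IsNet dist ξ net → IsCoarse dist ξ net X C →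
    (C.card : ℝ) ≤ max 1 (γ * ((diam dist X : ℝ) / ξ) ^ D)) ∧
  (∀ ξ r : ℝ, 1 ≤ ξ → ξ ≤ r → ∀ net : Finset Λ, IsNet dist ξ net → ∀ i : Λ,
    ((net.filter fun j => r ≤ (dist i j : ℝ) ∧ (dist i j : ℝ) < r + ξ).card : ℝ)
      ≤ 2 * γ * D * (2 * r / ξ) ^ (D - 1))

variable (dim : Λ → ℕ)

/-- Operators on the total Hilbert space `⨂_{i ∈ Λ} ℂ^{dim i}`, realized concretely as
matrices indexed by the classical configurations `∀ i, Fin (dim i)`. -/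
abbrev Op := Matrix (∀ i, Fin (dim i)) (∀ i, Fin (dim i)) ℂ

/-- The operator norm (the `ℓ² → ℓ²` norm). -/
noncomputable def opNorm (M : Op dim) : ℝ := ‖Matrix.toEuclideanCLM (𝕜 := ℂ) M‖

/-- `M` is supported on `X`, i.e. `M = M_X ⊗ 1_{Xᶜ}`. -/
def SupportedOn (X : Finset Λ) (M : Op dim) : Prop :=
  (∀ a b : ∀ i, Fin (dim i), (∃ i ∉ X, a i ≠ b i) → M a b = 0) ∧
  (∀ a b a' b' : ∀ i, Fin (dim i),
    (∀ i ∈ X, a i = a' i) → (∀ i ∈ X, b i = b' i) →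
    (∀ i ∉ X, a i = b i) → (∀ i ∉ X, a' i = b' i) → M a b = M a' b')

/-- Heisenberg evolution `O(A,t) = e^{iAt} O e^{-iAt}`. -/
noncomputable def heis (A : Op dim) (t : ℝ) (O : Op dim) : Op dim :=
  NormedSpace.exp ((Complex.I * (t : ℂ)) • A) * O *
    NormedSpace.exp ((-(Complex.I * (t : ℂ))) • A)

/-- `‖[A,B]‖`. -/
noncomputable def commNorm (A B : Op dim) : ℝ := opNorm dim (A * B - B * A)

/-- The local approximation `(tr_{Xᶜ} M ⊗ 1_{Xᶜ}) / tr_{Xᶜ}(1)` of `M` on the subset `X`. -/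
noncomputable def localApprox (X : Finset Λ) (M : Op dim) : Op dim :=
  fun a b =>
    if ∀ i, i ∉ X → a i = b i then
      (∏ i ∈ Xᶜ, (dim i : ℂ))⁻¹ *
        ∑ c : ∀ i : {i : Λ // i ∉ X}, Fin (dim i.1),
          M (fun i => if h : i ∈ X then a i else c ⟨i, h⟩)
            (fun i => if h : i ∈ X then b i else c ⟨i, h⟩)
    else 0

/-- `h` is a long-range Hamiltonian with parameters `g₀`, `α` (in spatial dimension `D`). -/
def IsLongRange (D : ℕ) (dist : Λ → Λ → ℕ) (g₀ α : ℝ) (h : Finset Λ → Op dim) : Prop :=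
  (∀ Z, (h Z).IsHermitian) ∧ (∀ Z, SupportedOn dim Z (h Z)) ∧
  (∀ i j : Λ,
    ∑ Z ∈ Finset.univ.filter (fun Z : Finset Λ => i ∈ Z ∧ j ∈ Z), opNorm dim (h Z)
      ≤ g₀ * ((dist i j : ℝ) + 1) ^ (-α)) ∧
  (∀ (i : Λ) (r : ℝ), 1 ≤ r →
    ∑ Z ∈ Finset.univ.filter (fun Z : Finset Λ => i ∈ Z ∧ r ≤ (diam dist Z : ℝ)),
        opNorm dim (h Z)
      ≤ r ^ (-(α - (D : ℝ))))

/-!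
Write `A = O_X(H₀,t)` and cover `L` by the balls `j[ξ]`, `j ∈ L^{(ξ)}`. A ball has diameter at
most `2ξ+1`, so the hypothesis bounds `‖[A, W]‖` by `B = F̃(t) e^{-d(X,L)/ξ₀} ‖O_X‖` for every
unitary `W` supported in `L ∩ j[ξ]`. Depolarizing `A` on such a region `Q`, i.e. averaging
`W A W⋆` over the Weyl operators `W` on `Q`, moves `A` by at most `B`, removes `Q` from its
support, and does not increase its commutators with operators supported off `Q`. After one such
step per ball, what is left of `A` is supported off `L` and commutes with `O_L`; each step costs
at most `2 B ‖O_L‖`.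
-/

open scoped Matrix.Norms.L2Operator

lemma norm_mul_sub_mul_le {E : Type*} [NonUnitalSeminormedRing E] (a b : E) :
    ‖a * b - b * a‖ ≤ 2 * ‖a‖ * ‖b‖ := by
  calc ‖a * b - b * a‖ ≤ ‖a‖ * ‖b‖ + ‖b‖ * ‖a‖ :=
        (norm_sub_le _ _).trans (add_le_add (norm_mul_le a b) (norm_mul_le b a))
    _ = 2 * ‖a‖ * ‖b‖ := by ring

lemma _root_.AddChar.mul_star_apply {G : Type*} [AddCommGroup G] [Finite G]
    (ψ : AddChar G ℂ) (a b : G) : ψ a * star (ψ b) = ψ (a - b) := by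
  rw [Complex.star_def, ← AddChar.map_neg_eq_conj, ← AddChar.map_add_eq_mul, sub_eq_add_neg]

section UnitaryAverage

variable {E ι : Type*} [CStarAlgebra E] [Fintype ι]

noncomputable def unitaryAverage (U : ι → unitary E) (A : E) : E :=
  (Fintype.card ι : ℂ)⁻¹ • ∑ k, (U k : E) * A * star (U k : E)

lemma norm_card_inv_smul_sum_le [Nonempty ι] {f : ι → E} {C : ℝ} (h : ∀ k, ‖f k‖ ≤ C) :
    ‖(Fintype.card ι : ℂ)⁻¹ • ∑ k, f k‖ ≤ C := by
  have hcard : (0 : ℝ) < Fintype.card ι := by exact_mod_cast Fintype.card_pos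
  calc ‖(Fintype.card ι : ℂ)⁻¹ • ∑ k, f k‖ ≤ (Fintype.card ι : ℝ)⁻¹ * ∑ k, ‖f k‖ := by
        rw [norm_smul, norm_inv, Complex.norm_natCast]
        gcongr
        exact norm_sum_le _ _
    _ ≤ (Fintype.card ι : ℝ)⁻¹ * (Fintype.card ι * C) := by
        gcongr
        simpa using Finset.sum_le_sum fun k (_ : k ∈ Finset.univ) => h k
    _ = C := by field_simp

lemma norm_unitaryAverage_le [Nonempty ι] (U : ι → unitary E) (A : E) :
    ‖unitaryAverage U A‖ ≤ ‖A‖ :=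
  norm_card_inv_smul_sum_le fun k => by
    rw [mul_assoc, CStarRing.norm_coe_unitary_mul, ← Unitary.coe_star,
      CStarRing.norm_mul_coe_unitary]

lemma norm_sub_unitaryAverage_le [Nonempty ι] (U : ι → unitary E) {A : E} {C : ℝ}
    (h : ∀ k, ‖A * U k - U k * A‖ ≤ C) : ‖A - unitaryAverage U A‖ ≤ C := by
  have hcard : (Fintype.card ι : ℂ) ≠ 0 := Nat.cast_ne_zero.mpr Fintype.card_ne_zero
  have hA : A = (Fintype.card ι : ℂ)⁻¹ • ∑ _k : ι, A := by
    rw [Finset.sum_const, Finset.card_univ, ← Nat.cast_smul_eq_nsmul ℂ, smul_smul,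
      inv_mul_cancel₀ hcard, one_smul]
  have hsplit : A - unitaryAverage U A
      = (Fintype.card ι : ℂ)⁻¹ • ∑ k, (A * U k - U k * A) * star (U k : E) := by
    nth_rw 1 [hA]
    simp only [unitaryAverage, ← smul_sub, ← Finset.sum_sub_distrib, sub_mul, mul_assoc,
      Unitary.mul_star_self_of_mem (U _).2, mul_one]
  rw [hsplit]
  refine norm_card_inv_smul_sum_le fun k => ?_
  rw [← Unitary.coe_star, CStarRing.norm_mul_coe_unitary]
  exact h k

lemma unitaryAverage_commutator (U : ι → unitary E) {N : E} (hN : ∀ k, Commute (U k : E) N)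
    (A : E) :
    unitaryAverage U A * N - N * unitaryAverage U A = unitaryAverage U (A * N - N * A) := by
  have hstar : ∀ k, Commute (star (U k : E)) N := fun k =>
    (hN k).units_inv_left (u := Unitary.toUnits (U k))
  simp only [unitaryAverage, smul_mul_assoc, mul_smul_comm, ← smul_sub, Finset.sum_mul,
    Finset.mul_sum, ← Finset.sum_sub_distrib, mul_sub, sub_mul]
  congr 2 with k
  calc (U k : E) * A * star (U k : E) * N - N * (U k * A * star (U k : E))
      = U k * A * (star (U k : E) * N) - N * U k * A * star (U k : E) := by noncomm_ring
    _ = U k * (A * N) * star (U k : E) - U k * (N * A) * star (U k : E) := by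
      rw [(hstar k).eq, ← (hN k).eq]; noncomm_ring

end UnitaryAverage

section Support

variable {dim}

abbrev Config (dim : Λ → ℕ) := ∀ i, Fin (dim i)

lemma opNorm_eq_norm (M : Op dim) : opNorm dim M = ‖M‖ := rfl

omit [DecidableEq Λ] in
lemma supportedOn_univ (M : Op dim) : SupportedOn dim Finset.univ M :=
  ⟨fun _ _ ⟨i, hi, _⟩ => absurd (Finset.mem_univ i) hi, fun a b a' b' ha hb _ _ => by
    rw [funext fun i => ha i (Finset.mem_univ i), funext fun i => hb i (Finset.mem_univ i)]⟩

lemma supportedOn_one (S : Finset Λ) : SupportedOn dim S 1 := by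
  refine ⟨fun a b ⟨i, _, hab⟩ => Matrix.one_apply_ne fun h => hab (congrFun h i),
    fun a b a' b' ha hb hab hab' => ?_⟩
  have hiff : a = b ↔ a' = b' := by
    simp only [funext_iff]
    refine forall_congr' fun i => ?_
    by_cases hi : i ∈ S
    · rw [ha i hi, hb i hi]
    · exact iff_of_true (hab i hi) (hab' i hi)
  simp only [Matrix.one_apply, hiff]

lemma SupportedOn.mul_apply_of_disjoint {X Y : Finset Λ} (hXY : Disjoint X Y) {M N : Op dim}
    (hM : SupportedOn dim X M) (hN : SupportedOn dim Y N) (x y : Config dim) :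
    (M * N) x y = M x (X.piecewise y x) * N (X.piecewise y x) y := by
  rw [Matrix.mul_apply, Finset.sum_eq_single (X.piecewise y x) _ (by simp)]
  intro u _ hu
  obtain ⟨i, hi⟩ := Function.ne_iff.mp hu
  by_cases hiX : i ∈ X
  · rw [Finset.piecewise_eq_of_mem _ _ _ hiX] at hi
    rw [hN.1 u y ⟨i, Finset.disjoint_left.mp hXY hiX, hi⟩, mul_zero]
  · rw [Finset.piecewise_eq_of_notMem _ _ _ hiX] at hi
    rw [hM.1 x u ⟨i, hiX, Ne.symm hi⟩, zero_mul]

lemma SupportedOn.commute {X Y : Finset Λ} (hXY : Disjoint X Y) {M N : Op dim}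
    (hM : SupportedOn dim X M) (hN : SupportedOn dim Y N) : Commute M N := by
  refine Matrix.ext fun x y => ?_
  rw [hM.mul_apply_of_disjoint hXY hN, hN.mul_apply_of_disjoint hXY.symm hM]
  have hX : ∀ i ∈ X, i ∉ Y := fun i hi => Finset.disjoint_left.mp hXY hi
  by_cases h : ∀ i, i ∉ X → i ∉ Y → x i = y i
  · have hMxy : M x (X.piecewise y x) = M (Y.piecewise y x) y := by
      refine hM.2 _ _ _ _ (fun i hi => ?_) (fun i hi => ?_) (fun i hi => ?_) (fun i hi => ?_)
      · simp [hX i hi]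
      · simp [hi]
      · simp [hi]
      · by_cases hiY : i ∈ Y <;> simp [hiY, h i hi]
    have hNxy : N (X.piecewise y x) y = N x (Y.piecewise y x) := by
      refine hN.2 _ _ _ _ (fun i hi => ?_) (fun i hi => ?_) (fun i hi => ?_) (fun i hi => ?_)
      · rw [Finset.piecewise_eq_of_notMem _ _ _ fun hiX => hX i hiX hi]
      · simp [hi]
      · by_cases hiX : i ∈ X
        · simp [hiX]
        · simp [hiX, h i hiX hi]
      · simp [hi]
    rw [hMxy, hNxy, mul_comm]
  · push Not at h
    obtain ⟨i, hiX, hiY, hxy⟩ := h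
    rw [hN.1 _ y ⟨i, hiY, by simpa [hiX] using hxy⟩, hM.1 _ y ⟨i, hiX, by simpa [hiY] using hxy⟩,
      mul_zero, mul_zero]

lemma nonneg_of_forall_commNorm_le [∀ i, NeZero (dim i)] {X Y : Finset Λ} (f : Op dim → Op dim)
    {c : ℝ} (h : ∀ OX OY : Op dim, SupportedOn dim X OX → SupportedOn dim Y OY →
      commNorm dim (f OX) OY ≤ c * opNorm dim OX * opNorm dim OY) : 0 ≤ c := by
  simpa [commNorm, opNorm_eq_norm] using h 1 1 (supportedOn_one X) (supportedOn_one Y)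

end Support

section Depolarize

variable {dim} [∀ i, NeZero (dim i)]

def projOn (Q : Finset Λ) : Config dim →+ Config dim where
  toFun a := Q.piecewise a 0
  map_zero' := Finset.piecewise_same _ _
  map_add' a b := by ext i; by_cases hi : i ∈ Q <;> simp [hi]

omit [Fintype Λ] in
lemma projOn_apply (Q : Finset Λ) (a : Config dim) (i : Λ) :
    projOn Q a i = if i ∈ Q then a i else 0 := rfl

/-- The Weyl operator on `Q`: the shift by `a` followed by the phase `ψ`, both acting only on the
coordinates in `Q`. -/
def weyl (Q : Finset Λ) (p : Config dim × AddChar (Config dim) ℂ) : Op dim :=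
  Matrix.of fun x y => if x = y + projOn Q p.1 then p.2 (projOn Q x) else 0

lemma weyl_mul_star (Q : Finset Λ) (p : Config dim × AddChar (Config dim) ℂ) :
    weyl Q p * star (weyl Q p) = 1 := by
  have hshift (x u : Config dim) : x = u + projOn Q p.1 ↔ u = x - projOn Q p.1 :=
    (eq_sub_iff_add_eq.trans eq_comm).symm
  ext x y
  simp only [weyl, Matrix.mul_apply, Matrix.star_apply, Matrix.of_apply, hshift,
    ite_mul, zero_mul, Finset.sum_ite_eq', Finset.mem_univ, if_true, sub_left_inj,
    Matrix.one_apply]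
  split_ifs with h
  · rw [h, AddChar.mul_star_apply, sub_self, AddChar.map_zero_eq_one]
  · rw [star_zero, mul_zero]

lemma weyl_mem_unitary (Q : Finset Λ) (p : Config dim × AddChar (Config dim) ℂ) :
    weyl Q p ∈ unitary (Op dim) :=
  Matrix.mem_unitaryGroup_iff.mpr (weyl_mul_star Q p)

lemma supportedOn_weyl (Q : Finset Λ) (p : Config dim × AddChar (Config dim) ℂ) :
    SupportedOn dim Q (weyl Q p) := by
  refine ⟨fun x y ⟨i, hi, hxy⟩ => if_neg fun h => hxy ?_, fun x y x' y' hx hy hxy hxy' => ?_⟩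
  · simpa [projOn_apply, hi] using congrFun h i
  have hproj : projOn Q x = projOn Q x' := by
    ext i
    by_cases hi : i ∈ Q <;> simp [projOn_apply, hi, hx i]
  have hiff : x = y + projOn Q p.1 ↔ x' = y' + projOn Q p.1 := by
    simp only [funext_iff]
    refine forall_congr' fun i => ?_
    by_cases hi : i ∈ Q
    · simp [projOn_apply, hi, hx i hi, hy i hi]
    · simp [projOn_apply, hi, hxy i hi, hxy' i hi]
  simp only [weyl, Matrix.of_apply, hiff, hproj]

lemma weyl_mul_mul_star_apply (Q : Finset Λ) (p : Config dim × AddChar (Config dim) ℂ)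
    (A : Op dim) (x y : Config dim) :
    (weyl Q p * A * star (weyl Q p)) x y
      = p.2 (projOn Q x - projOn Q y) * A (x - projOn Q p.1) (y - projOn Q p.1) := by
  have hshift (x u : Config dim) : x = u + projOn Q p.1 ↔ u = x - projOn Q p.1 :=
    (eq_sub_iff_add_eq.trans eq_comm).symm
  simp only [weyl, Matrix.mul_apply, Matrix.star_apply, Matrix.of_apply, hshift,
    ite_mul, zero_mul, apply_ite star, star_zero, mul_ite, mul_zero, Finset.sum_ite_eq',
    Finset.mem_univ, if_true]
  rw [mul_right_comm, AddChar.mul_star_apply]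

def weylUnitary (Q : Finset Λ) (p : Config dim × AddChar (Config dim) ℂ) : unitary (Op dim) :=
  ⟨weyl Q p, weyl_mem_unitary Q p⟩

/-- The Weyl operators on `Q` form a unitary 1-design there, so this is `tr_Q A ⊗ 1_Q / dim ℋ_Q`
(see `depolarize_apply`). -/
noncomputable def depolarize (Q : Finset Λ) (A : Op dim) : Op dim :=
  unitaryAverage (weylUnitary Q) A

lemma depolarize_apply (Q : Finset Λ) (A : Op dim) (x y : Config dim) :
    depolarize Q A x y = if projOn Q x = projOn Q y then
      (Fintype.card (Config dim) : ℂ)⁻¹ * ∑ a, A (x - projOn Q a) (y - projOn Q a) else 0 := by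
  simp only [depolarize, unitaryAverage, Matrix.smul_apply, Matrix.sum_apply, weylUnitary,
    weyl_mul_mul_star_apply, Fintype.sum_prod_type, ← Finset.sum_mul, AddChar.sum_apply_eq_ite,
    sub_eq_zero, Fintype.card_prod, AddChar.card_eq, smul_eq_mul]
  have hcard : (Fintype.card (Config dim) : ℂ) ≠ 0 := Nat.cast_ne_zero.mpr Fintype.card_ne_zero
  split_ifs
  · rw [← Finset.mul_sum, Nat.cast_mul]
    field_simp
  · simp

lemma SupportedOn.depolarize {S : Finset Λ} {A : Op dim} (hA : SupportedOn dim S A)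
    (Q : Finset Λ) : SupportedOn dim (S \ Q) (depolarize Q A) := by
  refine ⟨fun x y ⟨i, hi, hxy⟩ => ?_, fun x y x' y' hx hy hxy hxy' => ?_⟩
  · rw [depolarize_apply]
    by_cases hiQ : i ∈ Q
    · exact if_neg fun h => hxy (by simpa [projOn_apply, hiQ] using congrFun h i)
    · have hiS : i ∉ S := fun hiS => hi (Finset.mem_sdiff.mpr ⟨hiS, hiQ⟩)
      split_ifs
      · refine mul_eq_zero_of_right _ (Finset.sum_eq_zero fun a _ => hA.1 _ _ ⟨i, hiS, ?_⟩)
        simpa [projOn_apply, hiQ] using hxy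
      · rfl
  have hQ : ∀ i ∈ Q, x i = y i := fun i hi => hxy i (by simp [hi])
  have hQ' : ∀ i ∈ Q, x' i = y' i := fun i hi => hxy' i (by simp [hi])
  have hproj {u v : Config dim} (huv : ∀ i ∈ Q, u i = v i) : projOn Q u = projOn Q v := by
    ext i
    by_cases hi : i ∈ Q <;> simp [projOn_apply, hi, huv i]
  rw [depolarize_apply, depolarize_apply, if_pos (hproj hQ), if_pos (hproj hQ')]
  congr 1
  refine Fintype.sum_equiv (Equiv.addRight (x' - x)) _ _ fun a => ?_
  refine hA.2 _ _ _ _ (fun i hi => ?_) (fun i hi => ?_) (fun i hi => ?_) (fun i hi => ?_)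
  all_goals by_cases hiQ : i ∈ Q
  all_goals simp only [Pi.sub_apply, Equiv.coe_addRight, projOn_apply, hiQ, if_true, if_false,
    Pi.add_apply, sub_zero]
  · abel
  · exact hx i (Finset.mem_sdiff.mpr ⟨hi, hiQ⟩)
  · rw [← hQ i hiQ, ← hQ' i hiQ]; abel
  · exact hy i (Finset.mem_sdiff.mpr ⟨hi, hiQ⟩)
  · rw [hQ i hiQ]
  · exact hxy i fun h => hi (Finset.mem_sdiff.mp h).1
  · rw [hQ' i hiQ]
  · exact hxy' i fun h => hi (Finset.mem_sdiff.mp h).1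

lemma norm_depolarize_le (Q : Finset Λ) (A : Op dim) : ‖depolarize Q A‖ ≤ ‖A‖ :=
  norm_unitaryAverage_le _ A

lemma norm_sub_depolarize_le {Q : Finset Λ} {A : Op dim} {C : ℝ}
    (h : ∀ W : unitary (Op dim), SupportedOn dim Q W → ‖A * W - W * A‖ ≤ C) :
    ‖A - depolarize Q A‖ ≤ C :=
  norm_sub_unitaryAverage_le _ fun p => h _ (supportedOn_weyl Q p)

lemma depolarize_commutator {Q Y : Finset Λ} (hQY : Disjoint Q Y) {N : Op dim}
    (hN : SupportedOn dim Y N) (A : Op dim) :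
    depolarize Q A * N - N * depolarize Q A = depolarize Q (A * N - N * A) := by
  have hcomm (p : Config dim × AddChar (Config dim) ℂ) : Commute (weylUnitary Q p : Op dim) N :=
    (supportedOn_weyl Q p).commute hQY hN
  exact unitaryAverage_commutator _ hcomm A

end Depolarize

section Metric

variable {dist : Λ → Λ → ℕ}

omit [DecidableEq Λ] in
lemma mem_ball_singleton {i j : Λ} {r : ℝ} : i ∈ ball dist {j} r ↔ (dist i j : ℝ) ≤ r := by
  simp [ball]

omit [DecidableEq Λ] in
lemma diam_le_of_subset_ball (hmet : IsMetricN dist) {ξ : ℝ} (hξ : 0 ≤ ξ) {j : Λ}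
    {Y : Finset Λ} (hY : Y ⊆ ball dist {j} ξ) : (diam dist Y : ℝ) ≤ 2 * ξ + 1 := by
  have hsup : (Y.sup fun i => Y.sup fun k => dist i k) ≤ ⌊2 * ξ⌋₊ :=
    Finset.sup_le fun i hi => Finset.sup_le fun k hk => Nat.le_floor <| by
      have hij := mem_ball_singleton.mp (hY hi)
      have hkj := mem_ball_singleton.mp (hY hk)
      have htri : (dist i k : ℝ) ≤ dist i j + dist k j := by
        rw [← hmet.2.1 j k]; exact_mod_cast hmet.2.2 i j k
      linarith
  calc (diam dist Y : ℝ) = 1 + ((Y.sup fun i => Y.sup fun k => dist i k : ℕ) : ℝ) := by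
        simp [diam]
    _ ≤ 1 + 2 * ξ := by
        gcongr
        exact (Nat.cast_le.mpr hsup).trans (Nat.floor_le (by positivity))
    _ = 2 * ξ + 1 := by ring

omit [Fintype Λ] [DecidableEq Λ] in
lemma setDist_le_setDist_of_subset (X : Finset Λ) {Y L : Finset Λ} (hY : Y.Nonempty)
    (hYL : Y ⊆ L) : setDist dist X L ≤ setDist dist X Y := by
  rcases X.eq_empty_or_nonempty with rfl | ⟨i, hi⟩
  · simp [setDist]
  · obtain ⟨k, hk⟩ := hY
    exact csInf_le_csInf (OrderBot.bddBelow _) ⟨dist i k, i, hi, k, hk, rfl⟩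
      fun n ⟨i', hi', k', hk', h⟩ => ⟨i', hi', k', hYL hk', h⟩

end Metric

section Cover

variable {dim} [∀ i, NeZero (dim i)]

/-- `P` is the part of `L` that is still to be cleared: `A` already acts trivially on `L \ P`. -/
theorem norm_commutator_le_of_cover (R : Λ → Finset Λ) {L : Finset Λ} {OL : Op dim}
    (hOL : SupportedOn dim L OL) {B : ℝ} (C P Z : Finset Λ) (A : Op dim)
    (hP : P ⊆ C.biUnion R) (hZ : Z ∩ L ⊆ P) (hA : SupportedOn dim Z A)
    (hloc : ∀ j ∈ C, ∀ Y ⊆ P ∩ R j, ∀ W : unitary (Op dim), SupportedOn dim Y W →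
      ‖A * W - W * A‖ ≤ B) :
    ‖A * OL - OL * A‖ ≤ 2 * C.card * B * ‖OL‖ := by
  induction C using Finset.induction_on generalizing P Z A with
  | empty =>
    have hZL : Disjoint Z L := by
      rw [Finset.disjoint_iff_inter_eq_empty]
      simpa using hZ.trans hP
    rw [(hA.commute hZL hOL).eq, sub_self, norm_zero]
    simp
  | @insert j C hj ih =>
    set A' := depolarize (P ∩ R j) A
    have hA_sub : ‖A - A'‖ ≤ B :=
      norm_sub_depolarize_le fun W hW => hloc j (Finset.mem_insert_self j C) _ subset_rfl W hW
    have hA' : ‖A' * OL - OL * A'‖ ≤ 2 * C.card * B * ‖OL‖ := by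
      refine ih (P \ R j) (Z \ (P ∩ R j)) A' ?_ ?_ (hA.depolarize _) fun j' hj' Y hY W hW => ?_
      · exact sdiff_le_iff.mpr (by simpa [Finset.biUnion_insert] using hP)
      · intro i hi
        obtain ⟨hiZQ, hiL⟩ := Finset.mem_inter.mp hi
        obtain ⟨hiZ, hiQ⟩ := Finset.mem_sdiff.mp hiZQ
        have hiP := hZ (Finset.mem_inter.mpr ⟨hiZ, hiL⟩)
        exact Finset.mem_sdiff.mpr ⟨hiP, fun hR => hiQ (Finset.mem_inter.mpr ⟨hiP, hR⟩)⟩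
      · have hdisj : Disjoint (P ∩ R j) Y :=
          Finset.disjoint_of_subset_left Finset.inter_subset_right
            (Finset.disjoint_of_subset_right (hY.trans Finset.inter_subset_left)
              Finset.disjoint_sdiff)
        rw [depolarize_commutator hdisj hW]
        exact (norm_depolarize_le _ _).trans (hloc j' (Finset.mem_insert_of_mem hj') Y
          (hY.trans (Finset.inter_subset_inter_right Finset.sdiff_subset)) W hW)
    calc ‖A * OL - OL * A‖ = ‖((A - A') * OL - OL * (A - A')) + (A' * OL - OL * A')‖ := by
          congr 1; noncomm_ring
      _ ≤ 2 * ‖A - A'‖ * ‖OL‖ + ‖A' * OL - OL * A'‖ :=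
          norm_add_le_of_le (norm_mul_sub_mul_le _ _) le_rfl
      _ ≤ 2 * B * ‖OL‖ + 2 * C.card * B * ‖OL‖ := by gcongr
      _ = 2 * (insert j C).card * B * ‖OL‖ := by
          rw [Finset.card_insert_of_notMem hj]; push_cast; ring

theorem norm_commutator_le_of_forall_local {dist : Λ → Λ → ℕ} (hmet : IsMetricN dist) {ξ : ℝ}
    (hξ : 0 ≤ ξ) {L CL : Finset Λ} (hCL : ∀ i ∈ L, ∃ j ∈ CL, (dist i j : ℝ) ≤ ξ)
    {OL : Op dim} (hOL : SupportedOn dim L OL) {A : Op dim} {B : ℝ} (hB : 0 ≤ B)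
    (hloc : ∀ Y ⊆ L, Y.Nonempty → (diam dist Y : ℝ) ≤ 2 * ξ + 1 →
      ∀ W : unitary (Op dim), SupportedOn dim Y W → ‖A * W - W * A‖ ≤ B) :
    ‖A * OL - OL * A‖ ≤ 2 * CL.card * B * ‖OL‖ := by
  have hcover : L ⊆ CL.biUnion fun j => ball dist {j} ξ := fun i hi => by
    obtain ⟨j, hj, hij⟩ := hCL i hi
    exact Finset.mem_biUnion.mpr ⟨j, hj, mem_ball_singleton.mpr hij⟩
  refine norm_commutator_le_of_cover _ hOL CL L Finset.univ A hcover Finset.inter_subset_right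
    (supportedOn_univ A) fun j _ Y hY W hW => ?_
  rcases Y.eq_empty_or_nonempty with rfl | hYne
  · rw [((supportedOn_univ A).commute (Finset.disjoint_empty_right _) hW).eq, sub_self,
      norm_zero]
    exact hB
  · exact hloc Y (hY.trans Finset.inter_subset_left) hYne
      (diam_le_of_subset_ball hmet hξ (hY.trans Finset.inter_subset_right)) W hW

end Cover

theorem local_to_semiglobal_LR_general
    (Λ : Type) [Fintype Λ] [DecidableEq Λ]
    (dist : Λ → Λ → ℕ) (hmet : IsMetricN dist)
    (dim : Λ → ℕ) (hdim : ∀ i, 0 < dim i)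
    (ξ ξ₀ t : ℝ) (hξ : 1 ≤ ξ) (hξ₀ : 0 < ξ₀)
    (H₀ : Op dim)
    (F : ℝ → Finset Λ → Finset Λ → ℝ)
    (hLR : ∀ s : ℝ, s = t ∨ s = -t →
      ∀ X Y : Finset Λ, (diam dist X : ℝ) ≤ 2 * ξ + 1 → (diam dist Y : ℝ) ≤ 2 * ξ + 1 →
      ∀ OX OY : Op dim, SupportedOn dim X OX → SupportedOn dim Y OY →
        commNorm dim (heis dim H₀ s OX) OY
          ≤ F s X Y * Real.exp (-(setDist dist X Y : ℝ) / ξ₀) *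
            opNorm dim OX * opNorm dim OY) :
    ∀ X L : Finset Λ, (diam dist X : ℝ) ≤ 2 * ξ + 1 →
    ∀ net CL : Finset Λ, IsNet dist ξ net → IsCoarse dist ξ net L CL →
    ∀ OX OL : Op dim, SupportedOn dim X OX → SupportedOn dim L OL →
      commNorm dim (heis dim H₀ t OX) OL
        ≤ 2 * CL.card *
          sSup {v : ℝ | ∃ X' Y' : Finset Λ,
            (diam dist X' : ℝ) ≤ 2 * ξ + 1 ∧ (diam dist Y' : ℝ) ≤ 2 * ξ + 1 ∧
            v = F t X' Y'} *
          Real.exp (-(setDist dist X L : ℝ) / ξ₀) * opNorm dim OX * opNorm dim OL := by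
  intro X L hX net CL _ hCL OX OL hOX hOL
  have : ∀ i, NeZero (dim i) := fun i => ⟨(hdim i).ne'⟩
  set Fmax := sSup {v : ℝ | ∃ X' Y' : Finset Λ,
    (diam dist X' : ℝ) ≤ 2 * ξ + 1 ∧ (diam dist Y' : ℝ) ≤ 2 * ξ + 1 ∧ v = F t X' Y'}
  have hF : ∀ Y : Finset Λ, (diam dist Y : ℝ) ≤ 2 * ξ + 1 → 0 ≤ F t X Y ∧ F t X Y ≤ Fmax := by
    intro Y hY
    refine ⟨nonneg_of_mul_nonneg_left
      (nonneg_of_forall_commNorm_le _ (hLR t (.inl rfl) X Y hX hY)) (Real.exp_pos _),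
      le_csSup ?_ ⟨X, Y, hX, hY, rfl⟩⟩
    refine (Set.finite_range fun p : Finset Λ × Finset Λ => F t p.1 p.2).subset ?_ |>.bddAbove
    rintro _ ⟨X', Y', -, -, rfl⟩
    exact ⟨(X', Y'), rfl⟩
  have hFmax : 0 ≤ Fmax := (hF X hX).1.trans (hF X hX).2
  calc commNorm dim (heis dim H₀ t OX) OL
      ≤ 2 * CL.card * (Fmax * Real.exp (-(setDist dist X L : ℝ) / ξ₀) * ‖OX‖) * ‖OL‖ := by
        refine norm_commutator_le_of_forall_local hmet (by linarith) hCL.2.1 hOL (by positivity)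
          fun Y hYL hYne hYd W hW => ?_
        have hXY := setDist_le_setDist_of_subset (dist := dist) X hYne hYL
        calc _ ≤ F t X Y * Real.exp (-(setDist dist X Y : ℝ) / ξ₀) * ‖OX‖ * ‖(W : Op dim)‖ :=
              hLR t (.inl rfl) X Y hX hYd OX W hOX hW
          _ ≤ Fmax * Real.exp (-(setDist dist X L : ℝ) / ξ₀) * ‖OX‖ * 1 := by
              have hFY := hF Y hYd
              gcongr
              · exact hFY.2
              · exact (CStarRing.norm_coe_unitary W).le
          _ = _ := mul_one _
    _ = _ := by simp only [opNorm_eq_norm]; ring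

/-- Theorem 4, part i: from a Lieb–Robinson bound for local operators to a
bound where one of the two operators is arbitrary. -/
theorem local_to_semiglobal_LR
    (Λ : Type) [Fintype Λ] [DecidableEq Λ]
    (dist : Λ → Λ → ℕ) (hmet : IsMetricN dist)
    (dim : Λ → ℕ) (hdim : ∀ i, 0 < dim i)
    (ξ ξ₀ t : ℝ) (hξ : 1 ≤ ξ) (hξ₀ : 0 < ξ₀)
    (H₀ : Op dim) (hH₀ : H₀.IsHermitian)
    (F : ℝ → Finset Λ → Finset Λ → ℝ)
    (hFsymm : F t = F (-t))
    (hLR : ∀ s : ℝ, s = t ∨ s = -t →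
      ∀ X Y : Finset Λ, (diam dist X : ℝ) ≤ 2 * ξ + 1 → (diam dist Y : ℝ) ≤ 2 * ξ + 1 →
      ∀ OX OY : Op dim, SupportedOn dim X OX → SupportedOn dim Y OY →
        commNorm dim (heis dim H₀ s OX) OY
          ≤ F s X Y * Real.exp (-(setDist dist X Y : ℝ) / ξ₀) *
            opNorm dim OX * opNorm dim OY) :
    ∀ X L : Finset Λ, (diam dist X : ℝ) ≤ 2 * ξ + 1 →
    ∀ net CL : Finset Λ, IsNet dist ξ net → IsCoarse dist ξ net L CL →
    ∀ OX OL : Op dim, SupportedOn dim X OX → SupportedOn dim L OL →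
      commNorm dim (heis dim H₀ t OX) OL
        ≤ 2 * CL.card *
          sSup {v : ℝ | ∃ X' Y' : Finset Λ,
            (diam dist X' : ℝ) ≤ 2 * ξ + 1 ∧ (diam dist Y' : ℝ) ≤ 2 * ξ + 1 ∧
            v = F t X' Y'} *
          Real.exp (-(setDist dist X L : ℝ) / ξ₀) * opNorm dim OX * opNorm dim OL :=
  local_to_semiglobal_LR_general Λ dist hmet dim hdim ξ ξ₀ t hξ hξ₀ H₀ F hLR

end LightCone
end

section
/- Summation over the coarse-grained lattice (Lemma: summation of a decaying function over Λ^{(ξ)}). Let ξ ≥ 1, let x₀ be a real with x₀ ≥ ξ, let i ∈ Λ, and let f : ℝ → [0,∞) be a function with f(x₀) > 0 such that C_{f,x₀} := sup{ z^{D+1}·f(z) / (x₀^{D+1}·f(x₀)) : z ∈ ℝ, z ≥ x₀ } is finite. Then Σ_{j ∈ Λ^{(ξ)} : d(i,j) ≥ x₀} f(d(i,j)) ≤ 2^{D+1}·C_{f,x₀}·γ·D·ξ^{−D}·x₀^{D}·f(x₀). -/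
open scoped Classical

/-!
Split the points `j ∈ Λ^{(ξ)}` with `d(i,j) ≥ x₀` into the shells
`x₀ + kξ ≤ d(i,j) < x₀ + (k+1)ξ`. A shell at radius `r` has at most `2γD(2r/ξ)^{D-1}` points,
on each of which `f ≤ C_{f,x₀} x₀^{D+1} f(x₀) / r^{D+1}`, so it contributes `O(r⁻²)`; and
`∑ₖ (x₀ + kξ)⁻² ≤ 2/(ξ x₀)` by comparison with a telescoping sum.
-/

theorem sum_range_inv_sq_add_mul_le {ξ x₀ : ℝ} (hξ : 0 < ξ) (hx₀ : ξ ≤ x₀) (K : ℕ) :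
    ∑ k ∈ Finset.range K, ((x₀ + k * ξ) ^ 2)⁻¹ ≤ 2 / (ξ * x₀) := by
  set a : ℕ → ℝ := fun k => (ξ * (x₀ - ξ / 2 + k * ξ))⁻¹
  have hpos : ∀ k : ℕ, 0 < x₀ - ξ / 2 + k * ξ := fun k => by
    nlinarith [k.cast_nonneg (α := ℝ)]
  have hterm : ∀ k : ℕ, ((x₀ + k * ξ) ^ 2)⁻¹ ≤ a k - a (k + 1) := fun k => by
    have hk := hpos k
    have hsucc : x₀ - ξ / 2 + ((k + 1 : ℕ) : ℝ) * ξ = (x₀ - ξ / 2 + k * ξ) + ξ := by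
      push_cast; ring
    -- `b² ≥ (b - ξ/2)(b + ξ/2)`, and the right-hand side splits into partial fractions
    calc ((x₀ + k * ξ) ^ 2)⁻¹ ≤ ((x₀ - ξ / 2 + k * ξ) * (x₀ - ξ / 2 + k * ξ + ξ))⁻¹ :=
          inv_anti₀ (by positivity) (by nlinarith)
      _ = a k - a (k + 1) := by
          dsimp only [a]
          rw [hsucc]
          generalize x₀ - ξ / 2 + k * ξ = c at hk ⊢
          field_simp
          ring
  calc ∑ k ∈ Finset.range K, ((x₀ + k * ξ) ^ 2)⁻¹
      ≤ ∑ k ∈ Finset.range K, (a k - a (k + 1)) := Finset.sum_le_sum fun k _ => hterm k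
    _ = a 0 - a K := Finset.sum_range_sub' a K
    _ ≤ a 0 := sub_le_self _ (inv_nonneg.mpr (mul_nonneg hξ.le (hpos K).le))
    _ ≤ 2 / (ξ * x₀) := by
        have h0 := hpos 0
        simp only [a, Nat.cast_zero, zero_mul, add_zero] at h0 ⊢
        rw [← one_div, div_le_div_iff₀ (mul_pos hξ h0) (mul_pos hξ (hξ.trans_le hx₀))]
        nlinarith

theorem exists_sum_filter_le_eq_sum_range_shells {α : Type*} (s : Finset α) (ρ F : α → ℝ)
    {x₀ ξ : ℝ} (hξ : 0 < ξ) :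
    ∃ K : ℕ, ∑ j ∈ s.filter (fun j => x₀ ≤ ρ j), F j =
      ∑ k ∈ Finset.range K,
        ∑ j ∈ s.filter (fun j => x₀ + k * ξ ≤ ρ j ∧ ρ j < x₀ + k * ξ + ξ), F j := by
  set shell : α → ℕ := fun j => ⌊(ρ j - x₀) / ξ⌋₊
  refine ⟨(s.filter fun j => x₀ ≤ ρ j).sup shell + 1, ?_⟩
  rw [← Finset.sum_fiberwise_of_maps_to fun j hj =>
    Finset.mem_range_succ_iff.mpr (Finset.le_sup (f := shell) hj)]
  refine Finset.sum_congr rfl fun k _ => ?_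
  rw [Finset.filter_filter]
  refine Finset.sum_congr (Finset.filter_congr fun j _ => ?_) fun _ _ => rfl
  constructor
  · rintro ⟨hx, hk⟩
    rw [Nat.floor_eq_iff (div_nonneg (sub_nonneg.mpr hx) hξ.le), le_div_iff₀ hξ,
      div_lt_iff₀ hξ] at hk
    constructor <;> linarith
  · rintro ⟨hlo, hhi⟩
    have hx : x₀ ≤ ρ j := le_trans (le_add_of_nonneg_right (by positivity)) hlo
    refine ⟨hx, ?_⟩
    rw [Nat.floor_eq_iff (div_nonneg (sub_nonneg.mpr hx) hξ.le), le_div_iff₀ hξ,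
      div_lt_iff₀ hξ]
    constructor <;> linarith

-- also at `D = 0`, where `D - 1 = 0` in `ℕ`
theorem natCast_mul_pow_pred_mul (D : ℕ) (x : ℝ) : D * x ^ (D - 1) * x = D * x ^ D := by
  cases D with
  | zero => simp
  | succ n => rw [Nat.add_sub_cancel, mul_assoc, ← pow_succ]

namespace LightCone

/-- For `p = D + 1`, the supremum of this set is `C_{f,x₀}`. -/
def decayRatios (p : ℕ) (f : ℝ → ℝ) (x₀ : ℝ) : Set ℝ :=
  {w : ℝ | ∃ z : ℝ, x₀ ≤ z ∧ w = z ^ p * f z / (x₀ ^ p * f x₀)}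

section decayRatios

variable {p : ℕ} {f : ℝ → ℝ} {x₀ : ℝ}

theorem one_le_sSup_decayRatios (hx₀ : x₀ ≠ 0) (hfx₀ : f x₀ ≠ 0)
    (hbdd : BddAbove (decayRatios p f x₀)) : 1 ≤ sSup (decayRatios p f x₀) :=
  le_csSup hbdd ⟨x₀, le_rfl, by field_simp⟩

theorem le_sSup_decayRatios_mul_div_pow (hx₀ : 0 < x₀) (hfx₀ : 0 < f x₀)
    (hbdd : BddAbove (decayRatios p f x₀)) {z : ℝ} (hz : x₀ ≤ z) :
    f z ≤ sSup (decayRatios p f x₀) * (x₀ ^ p * f x₀) / z ^ p := by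
  have hratio : z ^ p * f z / (x₀ ^ p * f x₀) ≤ sSup (decayRatios p f x₀) :=
    le_csSup hbdd ⟨z, hz, rfl⟩
  rw [div_le_iff₀ (by positivity)] at hratio
  rw [le_div_iff₀ (pow_pos (hx₀.trans_le hz) p)]
  linarith

end decayRatios

section GeomConst

variable {Λ : Type} [Fintype Λ] {D : ℕ} {γ : ℝ} {dist : Λ → Λ → ℕ}

theorem GeomConst.card_shell_le (hgeom : GeomConst D γ dist) {ξ r : ℝ} (hξ : 1 ≤ ξ) (hr : ξ ≤ r)
    {net : Finset Λ} (hnet : IsNet dist ξ net) (i : Λ) :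
    ((net.filter fun j => r ≤ (dist i j : ℝ) ∧ (dist i j : ℝ) < r + ξ).card : ℝ)
      ≤ γ * D * (2 * r / ξ) ^ D * ξ / r := by
  have hr0 : 0 < r := by linarith
  refine (hgeom.2.2.2 ξ r hξ hr net hnet i).trans_eq ?_
  rw [eq_div_iff hr0.ne', mul_assoc γ, ← natCast_mul_pow_pred_mul D (2 * r / ξ)]
  field_simp

theorem GeomConst.sum_shell_le (hgeom : GeomConst D γ dist) {ξ r : ℝ} (hξ : 1 ≤ ξ) (hr : ξ ≤ r)
    {net : Finset Λ} (hnet : IsNet dist ξ net) (i : Λ) {f : ℝ → ℝ} {B : ℝ} (hB : 0 ≤ B)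
    (hf : ∀ z, r ≤ z → f z ≤ B / z ^ (D + 1)) :
    ∑ j ∈ net.filter (fun j => r ≤ (dist i j : ℝ) ∧ (dist i j : ℝ) < r + ξ), f (dist i j)
      ≤ γ * D * (2 / ξ) ^ D * ξ * B / r ^ 2 := by
  have hr0 : 0 < r := by linarith
  have hterm : ∀ j ∈ net.filter (fun j => r ≤ (dist i j : ℝ) ∧ (dist i j : ℝ) < r + ξ),
      f (dist i j) ≤ B / r ^ (D + 1) := fun j hj => by
    have hrj := (Finset.mem_filter.mp hj).2.1
    exact (hf _ hrj).trans
      (div_le_div_of_nonneg_left hB (by positivity) (pow_le_pow_left₀ hr0.le hrj _))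
  calc _ ≤ _ • (B / r ^ (D + 1)) := Finset.sum_le_card_nsmul _ _ _ hterm
    _ ≤ γ * D * (2 * r / ξ) ^ D * ξ / r * (B / r ^ (D + 1)) := by
        rw [nsmul_eq_mul]
        exact mul_le_mul_of_nonneg_right (hgeom.card_shell_le hξ hr hnet i) (by positivity)
    _ = γ * D * (2 / ξ) ^ D * ξ * B / r ^ 2 := by
        rw [show (2 * r / ξ) ^ D = (2 / ξ) ^ D * r ^ D by rw [← mul_pow]; ring, pow_succ]
        field_simp

end GeomConst

theorem sum_over_coarse_grained_lattice_general
    (D : ℕ) (γ : ℝ)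
    (Λ : Type) [Fintype Λ] [DecidableEq Λ]
    (dist : Λ → Λ → ℕ) (hgeom : GeomConst D γ dist)
    (ξ x₀ : ℝ) (hξ : 1 ≤ ξ) (hx₀ : ξ ≤ x₀)
    (f : ℝ → ℝ) (hfx₀ : 0 < f x₀)
    (hbdd : BddAbove {w : ℝ | ∃ z : ℝ, x₀ ≤ z ∧
      w = z ^ (D + 1) * f z / (x₀ ^ (D + 1) * f x₀)}) :
    ∀ net : Finset Λ, IsNet dist ξ net → ∀ i : Λ,
      ∑ j ∈ net.filter (fun j => x₀ ≤ (dist i j : ℝ)), f (dist i j)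
        ≤ 2 ^ (D + 1) *
          sSup {w : ℝ | ∃ z : ℝ, x₀ ≤ z ∧
            w = z ^ (D + 1) * f z / (x₀ ^ (D + 1) * f x₀)} *
          γ * D * (ξ ^ D)⁻¹ * x₀ ^ D * f x₀ := by
  intro net hnet i
  have hξ0 : 0 < ξ := by linarith
  have hx0 : 0 < x₀ := by linarith
  change _ ≤ 2 ^ (D + 1) * sSup (decayRatios (D + 1) f x₀) * _ * _ * _ * _ * _
  set C := sSup (decayRatios (D + 1) f x₀)
  have hC : 0 ≤ C := zero_le_one.trans (one_le_sSup_decayRatios hx0.ne' hfx₀.ne' hbdd)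
  have hγ : 0 ≤ γ := by simpa [diam] using hgeom.1 ∅
  set M := γ * D * (2 / ξ) ^ D * ξ * (C * (x₀ ^ (D + 1) * f x₀))
  have hM : 0 ≤ M := by positivity
  have hshell : ∀ k : ℕ, ∑ j ∈ net.filter (fun j => x₀ + k * ξ ≤ (dist i j : ℝ) ∧
      (dist i j : ℝ) < x₀ + k * ξ + ξ), f (dist i j) ≤ M / (x₀ + k * ξ) ^ 2 := fun k =>
    hgeom.sum_shell_le hξ (by nlinarith [k.cast_nonneg (α := ℝ)]) hnet i (by positivity)
      fun z hz => le_sSup_decayRatios_mul_div_pow hx0 hfx₀ hbdd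
        (le_trans (by nlinarith [k.cast_nonneg (α := ℝ)]) hz)
  obtain ⟨K, hK⟩ := exists_sum_filter_le_eq_sum_range_shells net (fun j => (dist i j : ℝ))
    (fun j => f (dist i j)) (x₀ := x₀) hξ0
  rw [hK]
  calc _ ≤ ∑ k ∈ Finset.range K, M * ((x₀ + k * ξ) ^ 2)⁻¹ :=
        Finset.sum_le_sum fun k _ => (hshell k).trans_eq (div_eq_mul_inv _ _)
    _ ≤ M * (2 / (ξ * x₀)) := by
        rw [← Finset.mul_sum]
        exact mul_le_mul_of_nonneg_left (sum_range_inv_sq_add_mul_le hξ0 hx₀ K) hM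
    _ = _ := by
        simp only [M, div_pow]
        field_simp
        ring

/-- summation of a decaying function over the coarse-grained lattice. -/
theorem sum_over_coarse_grained_lattice
    (D : ℕ) (hD : 0 < D) (γ : ℝ) (hγ : 1 ≤ γ)
    (Λ : Type) [Fintype Λ] [DecidableEq Λ]
    (dist : Λ → Λ → ℕ) (hmet : IsMetricN dist) (hgeom : GeomConst D γ dist)
    (ξ x₀ : ℝ) (hξ : 1 ≤ ξ) (hx₀ : ξ ≤ x₀)
    (f : ℝ → ℝ) (hf : ∀ x : ℝ, 0 ≤ f x) (hfx₀ : 0 < f x₀)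
    (hbdd : BddAbove {w : ℝ | ∃ z : ℝ, x₀ ≤ z ∧
      w = z ^ (D + 1) * f z / (x₀ ^ (D + 1) * f x₀)}) :
    ∀ net : Finset Λ, IsNet dist ξ net → ∀ i : Λ,
      ∑ j ∈ net.filter (fun j => x₀ ≤ (dist i j : ℝ)), f (dist i j)
        ≤ 2 ^ (D + 1) *
          sSup {w : ℝ | ∃ z : ℝ, x₀ ≤ z ∧
            w = z ^ (D + 1) * f z / (x₀ ^ (D + 1) * f x₀)} *
          γ * D * (ξ ^ D)⁻¹ * x₀ ^ D * f x₀ :=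
  sum_over_coarse_grained_lattice_general D γ Λ dist hgeom ξ x₀ hξ hx₀ f hfx₀ hbdd

end LightCone
end
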